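/- For every FOC2 formula φ(x,y) with two free variables and every natural number n, there exists a FOC2 sentence (formula with no free variables) σ such that for every multi-relational graph G: G ⊨ σ if and only if there exist at least n ordered node pairs (a,b) with (G,a,b) ⊨ φ. Explicitly, σ can be taken as a disjunction over all tuples (k_1,…,k_n) of naturals with n ≤ Σ_{i=1}^n i·k_i ≤ 2n of the formula ⋀_{i=1}^{n-1} ∃^{≥k_i} x (∃^{[i]} y φ(x,y)) ∧ ∃^{≥k_n} x (∃^{≥n} y φ(x,y)), where ∃^{[i]} y ψ abbreviates ∃^{≥i} y ψ ∧ ¬∃^{≥i+1} y ψ. -/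

import Mathlib

inductive Var : Type
  | x | y
deriving DecidableEq

structure MRGraph (P1 P2 : Type) where
  V : Type
  [fintV : Fintype V]
  [decV : DecidableEq V]
  unary : P1 → V → Prop
  rel : P2 → V → V → Prop
  [decU : ∀ p, DecidablePred (unary p)]
  [decR : ∀ r, DecidableRel (rel r)]

attribute [instance] MRGraph.fintV MRGraph.decV MRGraph.decU MRGraph.decR

inductive FOC2 (P1 P2 : Type) : Type
  | tru : FOC2 P1 P2
  | atom : P1 → Var → FOC2 P1 P2
  | rel : P2 → Var → Var → FOC2 P1 P2
  | and : FOC2 P1 P2 → FOC2 P1 P2 → FOC2 P1 P2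
  | or : FOC2 P1 P2 → FOC2 P1 P2 → FOC2 P1 P2
  | not : FOC2 P1 P2 → FOC2 P1 P2
  | exge : ℕ → Var → FOC2 P1 P2 → FOC2 P1 P2

variable {P1 P2 : Type}

/-- Satisfaction of a `FOC2` formula in a multi-relational graph under an assignment. -/
def MRGraph.sat (G : MRGraph P1 P2) : (Var → G.V) → FOC2 P1 P2 → Prop
  | _, .tru => True
  | σ, .atom p v => G.unary p (σ v)
  | σ, .rel r u w => G.rel r (σ u) (σ w)
  | σ, .and φ ψ => G.sat σ φ ∧ G.sat σ ψ
  | σ, .or φ ψ => G.sat σ φ ∨ G.sat σ ψ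
  | σ, .not φ => ¬ G.sat σ φ
  | σ, .exge n v φ => ∃ S : Finset G.V, S.card = n ∧ ∀ a ∈ S, G.sat (Function.update σ v a) φ

/-- Quantifier depth. -/
def FOC2.depth : FOC2 P1 P2 → ℕ
  | .tru => 0
  | .atom _ _ => 0
  | .rel _ _ _ => 0
  | .and φ ψ => max φ.depth ψ.depth
  | .or φ ψ => max φ.depth ψ.depth
  | .not φ => φ.depth
  | .exge _ _ φ => φ.depth + 1

/-- All counting thresholds are at most `m`. -/
def FOC2.thresholdsLe (m : ℕ) : FOC2 P1 P2 → Prop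
  | .tru => True
  | .atom _ _ => True
  | .rel _ _ _ => True
  | .and φ ψ => φ.thresholdsLe m ∧ ψ.thresholdsLe m
  | .or φ ψ => φ.thresholdsLe m ∧ ψ.thresholdsLe m
  | .not φ => φ.thresholdsLe m
  | .exge n _ φ => n ≤ m ∧ φ.thresholdsLe m

/-- Free variables. -/
def FOC2.freeVars : FOC2 P1 P2 → Finset Var
  | .tru => ∅
  | .atom _ v => {v}
  | .rel _ u w => {u, w}
  | .and φ ψ => φ.freeVars ∪ ψ.freeVars
  | .or φ ψ => φ.freeVars ∪ ψ.freeVars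
  | .not φ => φ.freeVars
  | .exge _ v φ => φ.freeVars \ {v}

/-- Parse-tree size. -/
def FOC2.size : FOC2 P1 P2 → ℕ
  | .tru => 1
  | .atom _ _ => 1
  | .rel _ _ _ => 1
  | .and φ ψ => φ.size + ψ.size + 1
  | .or φ ψ => φ.size + ψ.size + 1
  | .not φ => φ.size + 1
  | .exge _ _ φ => φ.size + 1


/-!
Write `d a` for the number of `b` with `(a, b) ⊨ φ` and `m j` for the number of `a` with
`d a ≥ j`. The number of pairs is `∑ₐ d a`, and it is at least `n` iff `∑ₐ min (d a) n ≥ n`.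
Counting the truncated sum by layers gives `∑ₐ min (d a) n = m 1 + ⋯ + m n`, and
`m 1 + ⋯ + m n ≥ n` holds iff some `t ∈ {0, …, n}ⁿ` with `t 1 + ⋯ + t n ≥ n` has `t j ≤ m j`
for all `j`. For a fixed `t` the latter is the sentence `⋀ⱼ ∃^{≥ t j} x ∃^{≥ j} y φ`, and the
disjunction over the finitely many admissible `t` is the required sentence. The cumulative
counts `∃^{≥ j} y φ` make the exact-degree classes `∃^{[i]} y φ` unnecessary.
-/

open Finset Function

section Counting

variable {α β ι : Type*}

lemma le_sum_min_iff (s : Finset ι) (f : ι → ℕ) (n : ℕ) :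
    n ≤ ∑ i ∈ s, min (f i) n ↔ n ≤ ∑ i ∈ s, f i := by
  refine ⟨fun h => h.trans (sum_le_sum fun i _ => min_le_left _ _), fun h => ?_⟩
  by_cases hbig : ∃ i ∈ s, n ≤ f i
  · obtain ⟨i, hi, hfi⟩ := hbig
    calc n = min (f i) n := (min_eq_right hfi).symm
      _ ≤ ∑ i ∈ s, min (f i) n :=
        single_le_sum (f := fun i => min (f i) n) (fun _ _ => Nat.zero_le _) hi
  · push Not at hbig
    rwa [sum_congr rfl fun i hi => min_eq_left (hbig i hi).le]

lemma exists_fin_le_sum_iff [Fintype ι] (M : ι → ℕ) (n : ℕ) :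
    (∃ t : ι → Fin (n + 1), n ≤ ∑ i, (t i : ℕ) ∧ ∀ i, (t i : ℕ) ≤ M i) ↔ n ≤ ∑ i, M i := by
  constructor
  · rintro ⟨t, hsum, hle⟩
    exact hsum.trans (sum_le_sum fun i _ => hle i)
  · intro h
    refine ⟨fun i => ⟨min (M i) n, Nat.lt_succ_of_le (min_le_right _ _)⟩, ?_,
      fun i => min_le_left _ _⟩
    exact (le_sum_min_iff univ M n).2 h

/-- Layer-cake formula for a truncated sum. -/
lemma sum_min_eq_sum_card_lt [Fintype α] (c : α → ℕ) (n : ℕ) :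
    ∑ a, min (c a) n = ∑ j : Fin n, #{a | (j : ℕ) < c a} := by
  have hlayers : ∀ a, min (c a) n = ∑ j : Fin n, if (j : ℕ) < c a then 1 else 0 := by
    intro a
    rw [sum_boole, Nat.cast_id, Fin.card_filter_val_lt, min_comm]
  simp_rw [hlayers, card_filter]
  exact sum_comm

lemma card_filter_prod_eq_sum [Fintype α] [Fintype β] (Q : α → β → Prop)
    [∀ a, DecidablePred (Q a)] :
    #{p : α × β | Q p.1 p.2} = ∑ a, #{b | Q a b} := by
  rw [card_filter, ← univ_product_univ, sum_product]
  simp_rw [card_filter]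

end Counting

namespace FOC2

def bigOr : List (FOC2 P1 P2) → FOC2 P1 P2
  | [] => .not .tru
  | f :: l => .or f (bigOr l)

def bigAnd : List (FOC2 P1 P2) → FOC2 P1 P2
  | [] => .tru
  | f :: l => .and f (bigAnd l)

lemma freeVars_bigOr {l : List (FOC2 P1 P2)} (h : ∀ f ∈ l, f.freeVars = ∅) :
    (bigOr l).freeVars = ∅ := by
  induction l with
  | nil => rfl
  | cons f l ih => simp_all [bigOr, freeVars]

lemma freeVars_bigAnd {l : List (FOC2 P1 P2)} (h : ∀ f ∈ l, f.freeVars = ∅) :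
    (bigAnd l).freeVars = ∅ := by
  induction l with
  | nil => rfl
  | cons f l ih => simp_all [bigAnd, freeVars]

lemma freeVars_exge_x_exge_y (k i : ℕ) (ψ : FOC2 P1 P2) :
    (exge k .x (exge i .y ψ)).freeVars = ∅ := by
  ext v
  cases v <;> simp [freeVars]

noncomputable def atLeastPairs (φ : FOC2 P1 P2) (n : ℕ) : FOC2 P1 P2 :=
  bigOr <| ({t | n ≤ ∑ j, (t j : ℕ)} : Finset (Fin n → Fin (n + 1))).toList.map fun t =>
    bigAnd <| (List.finRange n).map fun j : Fin n => exge (t j) .x (exge ((j : ℕ) + 1) .y φ)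

lemma freeVars_atLeastPairs (φ : FOC2 P1 P2) (n : ℕ) : (atLeastPairs φ n).freeVars = ∅ := by
  refine freeVars_bigOr ?_
  simp only [List.mem_map]
  rintro _ ⟨t, -, rfl⟩
  refine freeVars_bigAnd ?_
  simp only [List.mem_map]
  rintro _ ⟨j, -, rfl⟩
  exact freeVars_exge_x_exge_y _ _ _

end FOC2

def Var.pair {α : Type*} (a b : α) (v : Var) : α :=
  v.casesOn a b

lemma Var.update_update_x_y {α : Type*} (σ : Var → α) (a b : α) :
    update (update σ .x a) .y b = Var.pair a b := by
  funext v
  cases v <;> rfl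

namespace MRGraph

open FOC2

variable (G : MRGraph P1 P2)

lemma sat_bigOr (σ : Var → G.V) (l : List (FOC2 P1 P2)) :
    G.sat σ (bigOr l) ↔ ∃ f ∈ l, G.sat σ f := by
  induction l with
  | nil => simp [bigOr, sat]
  | cons f l ih => simp [bigOr, sat, ih]

lemma sat_bigAnd (σ : Var → G.V) (l : List (FOC2 P1 P2)) :
    G.sat σ (bigAnd l) ↔ ∀ f ∈ l, G.sat σ f := by
  induction l with
  | nil => simp [bigAnd, sat]
  | cons f l ih => simp [bigAnd, sat, ih]

open Classical in
lemma sat_exge_iff (σ : Var → G.V) (k : ℕ) (v : Var) (ψ : FOC2 P1 P2) :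
    G.sat σ (exge k v ψ) ↔ k ≤ #{a | G.sat (update σ v a) ψ} := by
  rw [le_card_iff_exists_subset_card]
  simp [sat, subset_iff, and_comm]

open Classical in
noncomputable def degree (φ : FOC2 P1 P2) (a : G.V) : ℕ := #{b | G.sat (Var.pair a b) φ}

open Classical in
lemma sat_exge_x_exge_y_iff (σ : Var → G.V) (k i : ℕ) (φ : FOC2 P1 P2) :
    G.sat σ (exge k .x (exge i .y φ)) ↔ k ≤ #{a | i ≤ G.degree φ a} := by
  simp only [sat_exge_iff, Var.update_update_x_y, degree]
  congr!

lemma sat_atLeastPairs_iff (σ : Var → G.V) (φ : FOC2 P1 P2) (n : ℕ) :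
    G.sat σ (atLeastPairs φ n) ↔ n ≤ ∑ a, G.degree φ a := by
  classical
  calc G.sat σ (atLeastPairs φ n)
      ↔ ∃ t : Fin n → Fin (n + 1), n ≤ ∑ j, (t j : ℕ) ∧
          ∀ j : Fin n, (t j : ℕ) ≤ #{a : G.V | (j : ℕ) < G.degree φ a} := by
        simp only [atLeastPairs, sat_bigOr, List.mem_map, exists_exists_and_eq_and, mem_toList,
          mem_filter_univ, sat_bigAnd, List.mem_finRange, true_and, forall_exists_index,
          forall_apply_eq_imp_iff, sat_exge_x_exge_y_iff, Nat.lt_iff_add_one_le]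
    _ ↔ n ≤ ∑ j : Fin n, #({a | (j : ℕ) < G.degree φ a} : Finset G.V) :=
        exists_fin_le_sum_iff _ n
    _ ↔ n ≤ ∑ a, G.degree φ a := by rw [← sum_min_eq_sum_card_lt, le_sum_min_iff]

end MRGraph

/-- For every `FOC2` formula `φ(x,y)` and every `n`, there is an `FOC2` sentence `σf`
holding in a graph iff there are at least `n` ordered node pairs satisfying `φ`. -/
theorem stmt3 {P1 P2 : Type} (φ : FOC2 P1 P2) (n : ℕ) :
    ∃ σf : FOC2 P1 P2, σf.freeVars = ∅ ∧
      ∀ (G : MRGraph P1 P2) (ρ : Var → G.V),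
        (G.sat ρ σf ↔
          ∃ S : Finset (G.V × G.V), S.card = n ∧
            ∀ p ∈ S, G.sat (fun w => match w with | Var.x => p.1 | Var.y => p.2) φ) := by
  classical
  refine ⟨FOC2.atLeastPairs φ n, FOC2.freeVars_atLeastPairs φ n, fun G ρ => ?_⟩
  have hpairs : ∑ a, G.degree φ a = #{p : G.V × G.V | G.sat (Var.pair p.1 p.2) φ} :=
    (card_filter_prod_eq_sum fun a b => G.sat (Var.pair a b) φ).symm
  have hpair (p : G.V × G.V) :
      (fun w => match w with | Var.x => p.1 | Var.y => p.2) = Var.pair p.1 p.2 := by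
    funext w
    cases w <;> rfl
  rw [G.sat_atLeastPairs_iff, hpairs, le_card_iff_exists_subset_card]
  simp only [subset_iff, mem_filter_univ, hpair]
  exact ⟨fun ⟨S, hS, hcard⟩ => ⟨S, hcard, hS⟩, fun ⟨S, hcard, hS⟩ => ⟨S, hS, hcard⟩⟩
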